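/- For any two fuzzy h-ideals μ and ν of a Γ-hemiring S (with left and right unities), (μ ∘_h ν)⁺′ = μ⁺′ ∘_h ν⁺′, where ∘_h denotes the generalized h-product (in S on the left side, and in L on the right side). -/

import Mathlib

open scoped Classical

/-- A `Γ`-hemiring structure on additive commutative monoids `S` and `Γ`. -/
structure GammaHemiring (S : Type) (Γ : Type) [AddCommMonoid S] [AddCommMonoid Γ] : Type where
  tri : S → Γ → S → S
  add_left : ∀ a b α c, tri (a + b) α c = tri a α c + tri b α c
  add_mid : ∀ a α β b, tri a (α + β) b = tri a α b + tri a β b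
  add_right : ∀ a α b c, tri a α (b + c) = tri a α b + tri a α c
  tri_assoc : ∀ a α b β c, tri a α (tri b β c) = tri (tri a α b) β c
  zero_left : ∀ α a, tri 0 α a = 0
  zero_right : ∀ a α, tri a α 0 = 0
  zero_mid : ∀ a b, tri a 0 b = 0

namespace GammaHemiring

variable {S Γ : Type} [AddCommMonoid S] [AddCommMonoid Γ] (H : GammaHemiring S Γ)

/-- Action of a formal sum `Σ (xᵢ, αᵢ)` on an element of `S`. -/
def lAct (u : Multiset (S × Γ)) (a : S) : S := (u.map fun p => H.tri p.1 p.2 a).sum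

/-- The congruence `ρ` on the free additive commutative semigroup on `S × Γ`. -/
def lSetoid : Setoid (Multiset (S × Γ)) where
  r u v := ∀ a, H.lAct u a = H.lAct v a
  iseqv := ⟨fun _ _ => rfl, fun h a => (h a).symm, fun h1 h2 a => (h1 a).trans (h2 a)⟩

/-- The left operator hemiring `L` of a `Γ`-hemiring `S`. -/
def LOp := Quotient H.lSetoid

/-- Multiplication of formal sums: `(Σ[xᵢ,αᵢ])(Σ[yⱼ,βⱼ]) = Σ[xᵢαᵢyⱼ, βⱼ]`. -/
def lMul (u v : Multiset (S × Γ)) : Multiset (S × Γ) :=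
  u.bind fun p => v.map fun q => (H.tri p.1 p.2 q.1, q.2)

lemma lAct_add (u v : Multiset (S × Γ)) (a : S) :
    H.lAct (u + v) a = H.lAct u a + H.lAct v a := by
  simp [lAct]

lemma tri_sum (x : S) (α : Γ) (m : Multiset S) :
    H.tri x α m.sum = (m.map (H.tri x α)).sum := by
  induction m using Multiset.induction_on with
  | empty => simp [H.zero_right]
  | cons b m ih => simp [H.add_right, ih]

lemma lAct_arg_add (u : Multiset (S × Γ)) (b c : S) :
    H.lAct u (b + c) = H.lAct u b + H.lAct u c := by
  simp only [lAct, H.add_right]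
  rw [← Multiset.sum_map_add]

lemma lAct_arg_zero (u : Multiset (S × Γ)) : H.lAct u 0 = 0 := by
  simp [lAct, H.zero_right]

lemma lAct_zero (a : S) : H.lAct 0 a = 0 := by simp [lAct]

lemma lAct_mul (u v : Multiset (S × Γ)) (a : S) :
    H.lAct (H.lMul u v) a = H.lAct u (H.lAct v a) := by
  unfold lAct lMul
  rw [Multiset.map_bind, Multiset.sum_bind]
  congr 1
  refine Multiset.map_congr rfl ?_
  intro p _
  rw [tri_sum, Multiset.map_map, Multiset.map_map]
  congr 1
  refine Multiset.map_congr rfl ?_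
  intro q _
  simp [Function.comp, H.tri_assoc]

noncomputable instance : Add H.LOp :=
  ⟨Quotient.map₂ (· + ·) (fun {u u'} hu {v v'} hv a => by
    rw [lAct_add, lAct_add, hu a, hv a])⟩

noncomputable instance : Zero H.LOp := ⟨Quotient.mk H.lSetoid 0⟩

noncomputable instance : Mul H.LOp :=
  ⟨Quotient.map₂ H.lMul (fun {u u'} hu {v v'} hv a => by
    rw [lAct_mul, lAct_mul, hv a, hu (H.lAct v' a)])⟩

/-- The left operator hemiring structure. -/
noncomputable instance : NonUnitalSemiring H.LOp where
  add := (· + ·)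
  zero := 0
  mul := (· * ·)
  nsmul := nsmulRec
  nsmul_zero := fun _ => rfl
  nsmul_succ := fun _ _ => rfl
  add_assoc a b c := Quotient.inductionOn₃ a b c fun u v w =>
    congrArg (Quotient.mk _) (add_assoc u v w)
  zero_add a := Quotient.inductionOn a fun u => congrArg (Quotient.mk _) (zero_add u)
  add_zero a := Quotient.inductionOn a fun u => congrArg (Quotient.mk _) (add_zero u)
  add_comm a b := Quotient.inductionOn₂ a b fun u v => congrArg (Quotient.mk _) (add_comm u v)
  left_distrib a b c := Quotient.inductionOn₃ a b c fun u v w => Quotient.sound fun s => by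
    simp [lAct_mul, lAct_add, lAct_arg_add]
  right_distrib a b c := Quotient.inductionOn₃ a b c fun u v w => Quotient.sound fun s => by
    simp [lAct_mul, lAct_add]
  zero_mul a := Quotient.inductionOn a fun u => Quotient.sound fun s => by
    simp [lAct_mul, lAct_zero]
  mul_zero a := Quotient.inductionOn a fun u => Quotient.sound fun s => by
    simp [lAct_mul, lAct_zero, lAct_arg_zero]
  mul_assoc a b c := Quotient.inductionOn₃ a b c fun u v w => Quotient.sound fun s => by
    simp [lAct_mul]

/-- The class of a formal sum in `L`. -/
def lMk (u : Multiset (S × Γ)) : H.LOp := Quotient.mk H.lSetoid u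

lemma mk_add (u v : Multiset (S × Γ)) : H.lMk u + H.lMk v = H.lMk (u + v) := rfl

lemma mk_mul (u v : Multiset (S × Γ)) : H.lMk u * H.lMk v = H.lMk (H.lMul u v) := rfl

/-- Action of an element of `L` on `S`. -/
def lActQ : H.LOp → S → S := Quotient.lift H.lAct (fun _ _ h => funext h)

end GammaHemiring
instance : Fact ((0:ℝ) ≤ 1) := ⟨zero_le_one⟩

/-- Characteristic function of a subset, valued in the unit interval. -/
noncomputable def fuzzyChar {X : Type} (A : Set X) (x : X) : unitInterval :=
  if x ∈ A then 1 else 0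

/-- A fuzzy h-ideal of a hemiring. -/
def IsFuzzyHIdeal {T : Type} [NonUnitalSemiring T] (μ : T → unitInterval) : Prop :=
  (∀ x y, μ x ⊓ μ y ≤ μ (x + y)) ∧
  (∀ x y, μ x ⊔ μ y ≤ μ (x * y)) ∧
  (∀ x a b z, x + a + z = b + z → μ a ⊓ μ b ≤ μ x)

namespace GammaHemiring

variable {S Γ : Type} [AddCommMonoid S] [AddCommMonoid Γ] (H : GammaHemiring S Γ)

/-- A fuzzy h-ideal of a `Γ`-hemiring. -/
def IsGFuzzyHIdeal (μ : S → unitInterval) : Prop :=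
  (∀ x y, μ x ⊓ μ y ≤ μ (x + y)) ∧
  (∀ x γ y, μ x ⊔ μ y ≤ μ (H.tri x γ y)) ∧
  (∀ x a b z, x + a + z = b + z → μ a ⊓ μ b ≤ μ x)

/-- For a fuzzy subset `μ` of `L`, the fuzzy subset `μ⁺` of `S`, `μ⁺(x) = inf_γ μ([x,γ])`. -/
noncomputable def plusMap (μ : H.LOp → unitInterval) (x : S) : unitInterval :=
  ⨅ γ : Γ, μ (H.lMk {(x, γ)})

/-- For a fuzzy subset `σ` of `S`, the fuzzy subset `σ⁺′` of `L`,
`σ⁺′(Σᵢ[xᵢ,αᵢ]) = inf_s σ(Σᵢ xᵢαᵢs)`. -/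
noncomputable def plusPrime (σ : S → unitInterval) : H.LOp → unitInterval :=
  Quotient.lift (fun u => ⨅ s : S, σ (H.lAct u s))
    (fun u v h => iInf_congr fun s => by rw [h s])

/-- A left unity of `S`: an element `Σᵢ[eᵢ,δᵢ]` of `L` acting as the identity. -/
def IsLeftUnity (E : Multiset (S × Γ)) : Prop := ∀ a : S, H.lAct E a = a

/-- A right unity of `S`: a formal sum `Σⱼ[γⱼ,fⱼ]` with `Σⱼ a γⱼ fⱼ = a` for all `a`. -/
def IsRightUnity (E : Multiset (Γ × S)) : Prop :=
  ∀ a : S, ((E.map fun p => H.tri a p.1 p.2).sum) = a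

end GammaHemiring
/-- An expression `x + Σᵢ aᵢγᵢbᵢ + z = Σᵢ cᵢδᵢdᵢ + z` in a `Γ`-hemiring. -/
structure GammaHemiring.GExpr {S Γ : Type} [AddCommMonoid S] [AddCommMonoid Γ]
    (H : GammaHemiring S Γ) (x : S) : Type where
  n : ℕ
  a : Fin (n + 1) → S
  g : Fin (n + 1) → Γ
  b : Fin (n + 1) → S
  c : Fin (n + 1) → S
  e : Fin (n + 1) → Γ
  d : Fin (n + 1) → S
  z : S
  eq : x + (∑ i, H.tri (a i) (g i) (b i)) + z = (∑ i, H.tri (c i) (e i) (d i)) + z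

/-- The generalized h-product of fuzzy subsets of a `Γ`-hemiring. -/
noncomputable def GammaHemiring.hProdG {S Γ : Type} [AddCommMonoid S] [AddCommMonoid Γ]
    (H : GammaHemiring S Γ) (μ ν : S → unitInterval) (x : S) : unitInterval :=
  ⨆ e : H.GExpr x, ⨅ i, (μ (e.a i) ⊓ μ (e.c i)) ⊓ (ν (e.b i) ⊓ ν (e.d i))

/-- An expression `x + Σᵢ aᵢbᵢ + z = Σᵢ cᵢdᵢ + z` in a hemiring. -/
structure HExpr (T : Type) [NonUnitalSemiring T] (x : T) : Type where
  n : ℕ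
  a : Fin (n + 1) → T
  b : Fin (n + 1) → T
  c : Fin (n + 1) → T
  d : Fin (n + 1) → T
  z : T
  eq : x + (∑ i, a i * b i) + z = (∑ i, c i * d i) + z

/-- The generalized h-product of fuzzy subsets of a hemiring. -/
noncomputable def hProdH {T : Type} [NonUnitalSemiring T] (μ ν : T → unitInterval)
    (x : T) : unitInterval :=
  ⨆ e : HExpr T x, ⨅ i, (μ (e.a i) ⊓ μ (e.c i)) ⊓ (ν (e.b i) ⊓ ν (e.d i))

/-
Write the left unity as `Σⱼ [eⱼ, δⱼ]`. Then every `X ∈ L` satisfies `X s = Σⱼ (X eⱼ) δⱼ s`,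
i.e. `X = Σⱼ [X eⱼ, δⱼ]`.

`μ⁺′ ∘_h ν⁺′ ≤ (μ ∘_h ν)⁺′`: apply an h-equation `X + Σ Aᵢ Bᵢ + Z = Σ Cᵢ Dᵢ + Z` of `L` to `s`
and expand `Aᵢ (Bᵢ s) = Σⱼ (Aᵢ eⱼ) δⱼ (Bᵢ s)`; this is an h-equation of `S` for `X s`, and
`μ⁺′(Aᵢ) ≤ μ(Aᵢ eⱼ)`, `ν⁺′(Bᵢ) ≤ ν(Bᵢ s)`.

`(μ ∘_h ν)⁺′ ≤ μ⁺′ ∘_h ν⁺′`: choose h-equations of `S` for the elements `X eⱼ`, push the `j`-th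
through `y ↦ [y, δⱼ]` and sum over `j`; since `[a, γ][b, δ] = [aγb, δ]` this is an h-equation of
`L` for `X`, and `μ(a) ≤ μ⁺′([a, γ])` because `μ` is an ideal.

Index sets are padded by a zero term, whose value `μ 0 ⊓ ν 0` bounds every value of an h-ideal.
-/

lemma le_hProdH_of_sum_eq {T : Type} [NonUnitalSemiring T] {ι : Type} [Fintype ι] {x z : T}
    (a b c d : ι → T) (heq : x + ∑ i, a i * b i + z = ∑ i, c i * d i + z)
    {μ ν : T → unitInterval} {r : unitInterval} (h0 : r ≤ μ 0 ⊓ ν 0)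
    (hr : ∀ i, r ≤ μ (a i) ⊓ μ (c i) ⊓ (ν (b i) ⊓ ν (d i))) : r ≤ hProdH μ ν x := by
  let eqv : Fin (Fintype.card ι + 1) ≃ Option ι :=
    (finSuccEquiv _).trans (Equiv.optionCongr (Fintype.equivFin ι).symm)
  have hsum : ∀ a b : ι → T, ∑ k, (eqv k).elim 0 a * (eqv k).elim 0 b = ∑ i, a i * b i :=
    fun a b => by
      rw [Equiv.sum_comp eqv (fun o => o.elim 0 a * o.elim 0 b), Fintype.sum_option]
      simp
  refine le_iSup_of_le ⟨_, fun k => (eqv k).elim 0 a, fun k => (eqv k).elim 0 b,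
    fun k => (eqv k).elim 0 c, fun k => (eqv k).elim 0 d, z, by rw [hsum, hsum]; exact heq⟩
    (le_iInf fun k => ?_)
  dsimp only
  cases eqv k with
  | none => simpa only [Option.elim_none, inf_idem] using h0
  | some i => exact hr i

namespace GammaHemiring

variable {S Γ : Type} [AddCommMonoid S] [AddCommMonoid Γ] (H : GammaHemiring S Γ)

lemma lAct_tri (v : Multiset (S × Γ)) (x : S) (γ : Γ) (t : S) :
    H.tri (H.lAct v x) γ t = H.lAct v (H.tri x γ t) := by
  induction v using Multiset.induction_on with
  | empty => simp [lAct, H.zero_left]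
  | cons p v ih =>
    simp only [lAct, Multiset.map_cons, Multiset.sum_cons] at *
    rw [H.add_left, ih, H.tri_assoc]

lemma lActQ_zero (s : S) : H.lActQ 0 s = 0 := H.lAct_zero s

lemma lActQ_mul (X Y : H.LOp) (s : S) : H.lActQ (X * Y) s = H.lActQ X (H.lActQ Y s) :=
  Quotient.inductionOn₂ X Y fun u v => H.lAct_mul u v s

lemma lActQ_arg_zero (X : H.LOp) : H.lActQ X 0 = 0 :=
  Quotient.inductionOn X H.lAct_arg_zero

lemma lActQ_tri (X : H.LOp) (x : S) (γ : Γ) (t : S) :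
    H.tri (H.lActQ X x) γ t = H.lActQ X (H.tri x γ t) :=
  Quotient.inductionOn X fun v => H.lAct_tri v x γ t

lemma lActQ_injective : Function.Injective H.lActQ := fun X Y h =>
  Quotient.inductionOn₂ X Y (fun _ _ h => Quotient.sound (congrFun h)) h

def lActQArgHom (X : H.LOp) : S →+ S where
  toFun := H.lActQ X
  map_zero' := H.lActQ_arg_zero X
  map_add' := Quotient.inductionOn X H.lAct_arg_add

noncomputable def lActQHom (s : S) : H.LOp →+ S where
  toFun X := H.lActQ X s
  map_zero' := H.lAct_zero s
  map_add' X Y := Quotient.inductionOn₂ X Y fun u v => H.lAct_add u v s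

@[simp] lemma lActQHom_apply (s : S) (X : H.LOp) : H.lActQHom s X = H.lActQ X s := rfl

/-- `H.bracket δ x` is the element `[x, δ]` of `L`. -/
noncomputable def bracket (δ : Γ) : S →+ H.LOp where
  toFun x := H.lMk {(x, δ)}
  map_zero' := Quotient.sound fun t => by simp [lAct, H.zero_left]
  map_add' x y := Quotient.sound fun t => by simp [lAct, H.add_left]

lemma lActQ_bracket (δ : Γ) (x t : S) : H.lActQ (H.bracket δ x) t = H.tri x δ t := by
  change H.lAct {(x, δ)} t = _
  simp [lAct]

lemma bracket_mul_bracket (a b : S) (γ δ : Γ) :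
    H.bracket γ a * H.bracket δ b = H.bracket δ (H.tri a γ b) :=
  H.lActQ_injective <| funext fun t => by simp only [lActQ_mul, lActQ_bracket, H.tri_assoc]

lemma le_hProdG_of_sum_eq {ι : Type} [Fintype ι] {x z : S} (a b c d : ι → S) (g f : ι → Γ)
    (heq : x + ∑ i, H.tri (a i) (g i) (b i) + z = ∑ i, H.tri (c i) (f i) (d i) + z)
    {μ ν : S → unitInterval} {r : unitInterval} (h0 : r ≤ μ 0 ⊓ ν 0)
    (hr : ∀ i, r ≤ μ (a i) ⊓ μ (c i) ⊓ (ν (b i) ⊓ ν (d i))) : r ≤ H.hProdG μ ν x := by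
  let eqv : Fin (Fintype.card ι + 1) ≃ Option ι :=
    (finSuccEquiv _).trans (Equiv.optionCongr (Fintype.equivFin ι).symm)
  have hsum : ∀ (a b : ι → S) (g : ι → Γ), ∑ k, H.tri ((eqv k).elim 0 a) ((eqv k).elim 0 g)
      ((eqv k).elim 0 b) = ∑ i, H.tri (a i) (g i) (b i) := fun a b g => by
    rw [Equiv.sum_comp eqv (fun o => H.tri (o.elim 0 a) (o.elim 0 g) (o.elim 0 b)),
      Fintype.sum_option]
    simp [H.zero_left]
  refine le_iSup_of_le ⟨_, fun k => (eqv k).elim 0 a, fun k => (eqv k).elim 0 g,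
    fun k => (eqv k).elim 0 b, fun k => (eqv k).elim 0 c, fun k => (eqv k).elim 0 f,
    fun k => (eqv k).elim 0 d, z, by rw [hsum, hsum]; exact heq⟩ (le_iInf fun k => ?_)
  dsimp only
  cases eqv k with
  | none => simpa only [Option.elim_none, inf_idem] using h0
  | some i => exact hr i

lemma plusPrime_eq_iInf (σ : S → unitInterval) (X : H.LOp) :
    H.plusPrime σ X = ⨅ s, σ (H.lActQ X s) :=
  Quotient.inductionOn X fun _ => rfl

lemma plusPrime_le (σ : S → unitInterval) (X : H.LOp) (t : S) :
    H.plusPrime σ X ≤ σ (H.lActQ X t) :=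
  (H.plusPrime_eq_iInf σ X).trans_le (iInf_le _ t)

lemma plusPrime_zero (σ : S → unitInterval) : H.plusPrime σ 0 = σ 0 := by
  simp [plusPrime_eq_iInf, lActQ_zero]

variable {H}

lemma IsGFuzzyHIdeal.le_zero {μ : S → unitInterval} (hμ : H.IsGFuzzyHIdeal μ) (x : S) :
    μ x ≤ μ 0 := by
  simpa using hμ.2.2 0 x x 0 (by simp)

lemma IsGFuzzyHIdeal.le_plusPrime_bracket {μ : S → unitInterval} (hμ : H.IsGFuzzyHIdeal μ)
    (γ : Γ) (x : S) : μ x ≤ H.plusPrime μ (H.bracket γ x) := by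
  rw [plusPrime_eq_iInf]
  refine le_iInf fun t => ?_
  rw [lActQ_bracket]
  exact le_sup_left.trans (hμ.2.1 x γ t)

lemma hProdG_le_inf_zero {μ ν : S → unitInterval} (hμ : H.IsGFuzzyHIdeal μ)
    (hν : H.IsGFuzzyHIdeal ν) (x : S) : H.hProdG μ ν x ≤ μ 0 ⊓ ν 0 :=
  iSup_le fun _ => iInf_le_of_le 0 <|
    inf_le_inf (inf_le_left.trans (hμ.le_zero _)) (inf_le_left.trans (hν.le_zero _))

variable (H)

section LeftUnity

variable {ι : Type} [Fintype ι] {e : ι → S} {δ : ι → Γ}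

lemma lActQ_eq_sum_tri (hE : ∀ a, ∑ j, H.tri (e j) (δ j) a = a) (X : H.LOp) (w : S) :
    H.lActQ X w = ∑ j, H.tri (H.lActQ X (e j)) (δ j) w := by
  conv_lhs => rw [← hE w]
  simp only [lActQ_tri]
  exact map_sum (H.lActQArgHom X) _ _

lemma sum_bracket_lActQ (hE : ∀ a, ∑ j, H.tri (e j) (δ j) a = a) (X : H.LOp) :
    ∑ j, H.bracket (δ j) (H.lActQ X (e j)) = X :=
  H.lActQ_injective <| funext fun t => by
    rw [H.lActQ_eq_sum_tri hE X t]
    exact (map_sum (H.lActQHom t) _ _).trans (by simp only [lActQHom_apply, lActQ_bracket])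

lemma hExpr_eq_of_unity (hE : ∀ a, ∑ j, H.tri (e j) (δ j) a = a) (X : H.LOp)
    {κ : ι → Type} [∀ j, Fintype (κ j)] (a b c d : ∀ j, κ j → S) (g f : ∀ j, κ j → Γ) (z : ι → S)
    (heq : ∀ j, H.lActQ X (e j) + ∑ i, H.tri (a j i) (g j i) (b j i) + z j =
      ∑ i, H.tri (c j i) (f j i) (d j i) + z j) :
    X + ∑ k : Σ j, κ j, H.bracket (g k.1 k.2) (a k.1 k.2) * H.bracket (δ k.1) (b k.1 k.2)
        + ∑ j, H.bracket (δ j) (z j) =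
      ∑ k : Σ j, κ j, H.bracket (f k.1 k.2) (c k.1 k.2) * H.bracket (δ k.1) (d k.1 k.2)
        + ∑ j, H.bracket (δ j) (z j) := by
  nth_rewrite 1 [← H.sum_bracket_lActQ hE X]
  simp only [bracket_mul_bracket, Fintype.sum_sigma, ← map_sum, ← Finset.sum_add_distrib,
    ← map_add, heq]

lemma hProdH_plusPrime_le (hE : ∀ a, ∑ j, H.tri (e j) (δ j) a = a) (μ ν : S → unitInterval)
    (X : H.LOp) : hProdH (H.plusPrime μ) (H.plusPrime ν) X ≤ H.plusPrime (H.hProdG μ ν) X := by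
  refine iSup_le fun ex => ?_
  rw [plusPrime_eq_iInf]
  refine le_iInf fun s => ?_
  have hmul : ∀ Y Z : H.LOp,
      H.lActQ (Y * Z) s = ∑ j, H.tri (H.lActQ Y (e j)) (δ j) (H.lActQ Z s) := fun Y Z => by
    rw [lActQ_mul, H.lActQ_eq_sum_tri hE Y]
  have heq := congrArg (H.lActQHom s) ex.eq
  simp only [map_add, map_sum, lActQHom_apply, hmul] at heq
  refine H.le_hProdG_of_sum_eq (ι := Fin (ex.n + 1) × ι)
    (fun p => H.lActQ (ex.a p.1) (e p.2)) (fun p => H.lActQ (ex.b p.1) s)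
    (fun p => H.lActQ (ex.c p.1) (e p.2)) (fun p => H.lActQ (ex.d p.1) s)
    (fun p => δ p.2) (fun p => δ p.2) (z := H.lActQ ex.z s)
    (by simpa only [Fintype.sum_prod_type] using heq) ?_ ?_
  · refine (iInf_le _ 0).trans (inf_le_inf ?_ ?_) <;> refine inf_le_left.trans ?_
    · simpa only [lActQ_arg_zero] using H.plusPrime_le μ (ex.a 0) 0
    · simpa only [lActQ_arg_zero] using H.plusPrime_le ν (ex.b 0) 0
  · rintro ⟨i, j⟩
    exact (iInf_le _ i).trans <| inf_le_inf
      (inf_le_inf (H.plusPrime_le _ _ _) (H.plusPrime_le _ _ _))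
      (inf_le_inf (H.plusPrime_le _ _ _) (H.plusPrime_le _ _ _))

lemma plusPrime_hProdG_le (hE : ∀ a, ∑ j, H.tri (e j) (δ j) a = a) {μ ν : S → unitInterval}
    (hμ : H.IsGFuzzyHIdeal μ) (hν : H.IsGFuzzyHIdeal ν) (X : H.LOp) :
    H.plusPrime (H.hProdG μ ν) X ≤ hProdH (H.plusPrime μ) (H.plusPrime ν) X := by
  refine le_of_forall_lt_imp_le_of_dense fun r hr => ?_
  have hr_at : ∀ s, r < H.hProdG μ ν (H.lActQ X s) := fun s =>
    hr.trans_le (H.plusPrime_le _ X s)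
  choose ex hex using fun j => lt_iSup_iff.mp (hr_at (e j))
  refine le_hProdH_of_sum_eq (ι := Σ j, Fin ((ex j).n + 1))
    (fun k => H.bracket ((ex k.1).g k.2) ((ex k.1).a k.2))
    (fun k => H.bracket (δ k.1) ((ex k.1).b k.2))
    (fun k => H.bracket ((ex k.1).e k.2) ((ex k.1).c k.2))
    (fun k => H.bracket (δ k.1) ((ex k.1).d k.2))
    (H.hExpr_eq_of_unity hE X (fun j => (ex j).a) (fun j => (ex j).b) (fun j => (ex j).c)
      (fun j => (ex j).d) (fun j => (ex j).g) (fun j => (ex j).e) (fun j => (ex j).z)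
      (fun j => (ex j).eq)) ?_ ?_
  · rw [plusPrime_zero, plusPrime_zero]
    simpa only [lActQ_arg_zero] using (hr_at 0).le.trans (hProdG_le_inf_zero hμ hν _)
  · rintro ⟨j, i⟩
    exact ((hex j).le.trans (iInf_le _ i)).trans <| inf_le_inf
      (inf_le_inf (hμ.le_plusPrime_bracket _ _) (hμ.le_plusPrime_bracket _ _))
      (inf_le_inf (hν.le_plusPrime_bracket _ _) (hν.le_plusPrime_bracket _ _))

end LeftUnity

lemma IsLeftUnity.exists_fin {E : Multiset (S × Γ)} (hE : H.IsLeftUnity E) :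
    ∃ (n : ℕ) (e : Fin n → S) (δ : Fin n → Γ), ∀ a, ∑ j, H.tri (e j) (δ j) a = a :=
  ⟨_, fun j => E.toList[j].1, fun j => E.toList[j].2, fun a => by
    have h := hE a
    rwa [lAct, ← Multiset.coe_toList E, Multiset.map_coe, Multiset.sum_coe,
      ← Fin.sum_univ_fun_getElem] at h⟩

end GammaHemiring

theorem plusPrime_hProd_general {S Γ : Type} [AddCommMonoid S] [AddCommMonoid Γ]
    (H : GammaHemiring S Γ)
    (E : Multiset (S × Γ)) (hE : H.IsLeftUnity E)
    (μ ν : S → unitInterval) (hμ : H.IsGFuzzyHIdeal μ) (hν : H.IsGFuzzyHIdeal ν) :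
    H.plusPrime (H.hProdG μ ν) = hProdH (H.plusPrime μ) (H.plusPrime ν) := by
  obtain ⟨n, e, δ, he⟩ := hE.exists_fin
  funext X
  exact le_antisymm (H.plusPrime_hProdG_le he hμ hν X) (H.hProdH_plusPrime_le he μ ν X)

/-- for fuzzy h-ideals `μ`, `ν` of `S` (with left and right unities),
`(μ ∘_h ν)⁺′ = μ⁺′ ∘_h ν⁺′`. -/
theorem plusPrime_hProd {S Γ : Type} [AddCommMonoid S] [AddCommMonoid Γ]
    (H : GammaHemiring S Γ)
    (E : Multiset (S × Γ)) (hE : H.IsLeftUnity E)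
    (E' : Multiset (Γ × S)) (hE' : H.IsRightUnity E')
    (μ ν : S → unitInterval) (hμ : H.IsGFuzzyHIdeal μ) (hν : H.IsGFuzzyHIdeal ν) :
    H.plusPrime (H.hProdG μ ν) = hProdH (H.plusPrime μ) (H.plusPrime ν) :=
  plusPrime_hProd_general H E hE μ ν hμ hν
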